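/- For all $x,y \in R(r,1)$ with $0<r<1$, the inequality chain $\frac{1}{2}s_{R(r,1)}(x,y) \le j^*_{R(r,1)}(x,y) \le \mathrm{th}\frac{\delta_{R(r,1)}(x,y)}{2} \le 2 j^*_{R(r,1)}(x,y) \le 2 s_{R(r,1)}(x,y)$ holds. -/

import Mathlib

open Real Set

/-- The annular ring `R(r,1) = {z : r < |z| < 1}`. -/
def annulus (r : ℝ) : Set ℂ := {z : ℂ | r < ‖z‖ ∧ ‖z‖ < 1}

/-- The triangular ratio metric `s_G`. -/
noncomputable def sMetric (G : Set ℂ) (x y : ℂ) : ℝ :=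
  ‖x - y‖ /
    sInf ((fun z => ‖x - z‖ + ‖z - y‖) '' frontier G)

/-- The `j*`-metric. -/
noncomputable def jStar (G : Set ℂ) (x y : ℂ) : ℝ :=
  ‖x - y‖ /
    (‖x - y‖ +
      2 * min (Metric.infDist x (frontier G)) (Metric.infDist y (frontier G)))

/-- The (absolute) cross-ratio `|a,x,b,y|`. -/
noncomputable def crossRatio (a x b y : ℂ) : ℝ :=
  (‖a - b‖ * ‖x - y‖) / (‖a - x‖ * ‖b - y‖)

/-- The Möbius (Seittenranta) metric `δ_G`. -/
noncomputable def deltaMetric (G : Set ℂ) (x y : ℂ) : ℝ :=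
  sSup ((fun p : ℂ × ℂ => Real.log (1 + crossRatio p.1 x p.2 y)) '' (frontier G ×ˢ frontier G))

/-!
Write `L = |x - y|`, `m = min {d(x), d(y)}` and `K = L / m`, so that `j* = K / (K + 2)`.
In every domain the infimum defining `s` lies between `max {L, 2m}` and `L + 2m`, which gives
`j* ≤ s ≤ 2 j*`, and the triangle inequality bounds every cross-ratio `|a,x,b,y|` by
`K² + 2K`, so `th(δ/2) = (e^δ - 1)/(e^δ + 1) ≤ 2 j*`. The remaining inequality
`j* ≤ th(δ/2)` amounts to `e^δ ≥ 1 + K`: take `a ∈ ∂G` nearest to `x` (say) and a boundary point `b`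
at least as close to `y` as to `a`. In the annulus such a `b` always exists on the unit circle:
`b = -a` if `|a| = 1`, and `b = y / |y|` if `|a| = r`.
-/

open Metric

noncomputable def minBoundaryDist (G : Set ℂ) (x y : ℂ) : ℝ :=
  min (infDist x (frontier G)) (infDist y (frontier G))

lemma tanh_half_eq (t : ℝ) : tanh (t / 2) = (exp t - 1) / (exp t + 1) := by
  have hexp : exp t = exp (t / 2) * exp (t / 2) := by rw [← exp_add, add_halves]
  rw [tanh_eq_sinh_div_cosh, sinh_eq, cosh_eq, hexp, exp_neg]
  field_simp

lemma div_add_two_mul_le_of_one_add_div_le {L m E : ℝ} (hL : 0 ≤ L) (hm : 0 < m)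
    (h : 1 + L / m ≤ E) : L / (L + 2 * m) ≤ (E - 1) / (E + 1) := by
  have h' : m + L ≤ m * E := by
    have := mul_le_mul_of_nonneg_left h hm.le
    rwa [mul_add, mul_one, mul_div_cancel₀ _ hm.ne'] at this
  rw [div_le_div_iff₀ (by positivity) (by linarith [div_nonneg hL hm.le])]
  nlinarith

lemma div_le_two_mul_div_of_le_sq {L m E : ℝ} (hL : 0 ≤ L) (hm : 0 < m) (hE : 0 < E)
    (h : E ≤ (1 + L / m) ^ 2) : (E - 1) / (E + 1) ≤ 2 * (L / (L + 2 * m)) := by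
  have h' : m ^ 2 * E ≤ (m + L) ^ 2 := by
    have := mul_le_mul_of_nonneg_left h (sq_nonneg m)
    rwa [← mul_pow, mul_add, mul_one, mul_div_cancel₀ _ hm.ne'] at this
  rw [mul_div_assoc', div_le_div_iff₀ (by positivity) (by positivity)]
  rcases le_total (2 * m) L with hLm | hLm
  · nlinarith
  · refine le_of_mul_le_mul_left ?_ (pow_pos hm 2)
    nlinarith [mul_le_mul_of_nonneg_right h' (by linarith : 0 ≤ 2 * m - L), pow_nonneg hL 3]

lemma crossRatio_nonneg (a x b y : ℂ) : 0 ≤ crossRatio a x b y := by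
  unfold crossRatio; positivity

lemma crossRatio_swap (a x b y : ℂ) : crossRatio b y a x = crossRatio a x b y := by
  simp only [crossRatio, norm_sub_rev b a, norm_sub_rev y x, mul_comm ‖b - y‖]

lemma div_norm_sub_le_crossRatio {a x b y : ℂ} (hby : 0 < ‖b - y‖) (hle : ‖b - y‖ ≤ ‖a - b‖) :
    ‖x - y‖ / ‖a - x‖ ≤ crossRatio a x b y :=
  calc ‖x - y‖ / ‖a - x‖ ≤ ‖x - y‖ / ‖a - x‖ * (‖a - b‖ / ‖b - y‖) :=
        le_mul_of_one_le_right (by positivity) ((one_le_div hby).2 hle)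
    _ = crossRatio a x b y := by unfold crossRatio; ring

lemma one_add_crossRatio_le {a x b y : ℂ} {m : ℝ} (hm : 0 < m) (hax : m ≤ ‖a - x‖)
    (hby : m ≤ ‖b - y‖) : 1 + crossRatio a x b y ≤ (1 + ‖x - y‖ / m) ^ 2 := by
  have hA : 0 < ‖a - x‖ := hm.trans_le hax
  have hB : 0 < ‖b - y‖ := hm.trans_le hby
  have htri : ‖a - b‖ ≤ ‖a - x‖ + ‖x - y‖ + ‖b - y‖ := by
    simpa [dist_eq_norm, norm_sub_rev y b] using dist_triangle4 a x y b
  have hcr : crossRatio a x b y ≤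
      ‖x - y‖ / ‖b - y‖ + ‖x - y‖ / ‖a - x‖ + ‖x - y‖ / ‖a - x‖ * (‖x - y‖ / ‖b - y‖) :=
    calc crossRatio a x b y
        ≤ (‖a - x‖ + ‖x - y‖ + ‖b - y‖) * ‖x - y‖ / (‖a - x‖ * ‖b - y‖) := by
          unfold crossRatio; gcongr
      _ = _ := by field_simp; ring
  have hK : ‖x - y‖ / ‖b - y‖ + ‖x - y‖ / ‖a - x‖ + ‖x - y‖ / ‖a - x‖ * (‖x - y‖ / ‖b - y‖) ≤
      ‖x - y‖ / m + ‖x - y‖ / m + ‖x - y‖ / m * (‖x - y‖ / m) := by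
    gcongr
  nlinarith

section Domain

variable {G : Set ℂ} {x y a b : ℂ}

lemma jStar_eq_div : jStar G x y = ‖x - y‖ / (‖x - y‖ + 2 * minBoundaryDist G x y) := rfl

lemma minBoundaryDist_nonneg (G : Set ℂ) (x y : ℂ) : 0 ≤ minBoundaryDist G x y :=
  le_min infDist_nonneg infDist_nonneg

lemma minBoundaryDist_le_left (ha : a ∈ frontier G) : minBoundaryDist G x y ≤ ‖a - x‖ := by
  rw [norm_sub_rev, ← dist_eq_norm]
  exact (min_le_left _ _).trans (infDist_le_dist_of_mem ha)

lemma minBoundaryDist_le_right (hb : b ∈ frontier G) : minBoundaryDist G x y ≤ ‖b - y‖ := by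
  rw [norm_sub_rev, ← dist_eq_norm]
  exact (min_le_right _ _).trans (infDist_le_dist_of_mem hb)

lemma minBoundaryDist_pos (hF : (frontier G).Nonempty) (hx : x ∉ frontier G)
    (hy : y ∉ frontier G) : 0 < minBoundaryDist G x y :=
  lt_min ((isClosed_frontier.notMem_iff_infDist_pos hF).1 hx)
    ((isClosed_frontier.notMem_iff_infDist_pos hF).1 hy)

lemma exists_mem_frontier_norm_sub_eq_minBoundaryDist (hF : (frontier G).Nonempty) :
    ∃ a ∈ frontier G, ‖a - x‖ = minBoundaryDist G x y ∨ ‖a - y‖ = minBoundaryDist G x y := by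
  rcases min_choice (infDist x (frontier G)) (infDist y (frontier G)) with h | h
  · obtain ⟨a, ha, hxa⟩ := isClosed_frontier.exists_infDist_eq_dist hF x
    exact ⟨a, ha, .inl (by rw [minBoundaryDist, h, hxa, dist_eq_norm, norm_sub_rev])⟩
  · obtain ⟨a, ha, hya⟩ := isClosed_frontier.exists_infDist_eq_dist hF y
    exact ⟨a, ha, .inr (by rw [minBoundaryDist, h, hya, dist_eq_norm, norm_sub_rev])⟩

lemma le_sInf_norm_add_norm (hF : (frontier G).Nonempty) :
    max ‖x - y‖ (2 * minBoundaryDist G x y) ≤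
      sInf ((fun z => ‖x - z‖ + ‖z - y‖) '' frontier G) := by
  refine le_csInf (hF.image _) (forall_mem_image.2 fun a ha => max_le ?_ ?_)
  · exact norm_sub_le_norm_sub_add_norm_sub x a y
  · linarith [minBoundaryDist_le_left (x := x) (y := y) ha,
      minBoundaryDist_le_right (x := x) (y := y) ha, norm_sub_rev a x]

lemma sInf_norm_add_norm_le (hF : (frontier G).Nonempty) :
    sInf ((fun z => ‖x - z‖ + ‖z - y‖) '' frontier G) ≤ ‖x - y‖ + 2 * minBoundaryDist G x y := by
  have hbdd : BddBelow ((fun z => ‖x - z‖ + ‖z - y‖) '' frontier G) :=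
    ⟨0, forall_mem_image.2 fun _ _ => by positivity⟩
  obtain ⟨a, ha, hax | hay⟩ := exists_mem_frontier_norm_sub_eq_minBoundaryDist (x := x) (y := y) hF
  all_goals refine (csInf_le hbdd (mem_image_of_mem _ ha)).trans ?_
  · linarith [norm_sub_le_norm_sub_add_norm_sub a x y, norm_sub_rev x a]
  · linarith [norm_sub_le_norm_sub_add_norm_sub x y a, norm_sub_rev y a]

theorem jStar_le_sMetric (hF : (frontier G).Nonempty) : jStar G x y ≤ sMetric G x y := by
  rcases eq_or_ne x y with rfl | hxy
  · simp [jStar, sMetric]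
  have hL : 0 < ‖x - y‖ := norm_pos_iff.2 (sub_ne_zero.2 hxy)
  exact div_le_div_of_nonneg_left hL.le (hL.trans_le ((le_max_left _ _).trans
    (le_sInf_norm_add_norm hF))) (sInf_norm_add_norm_le hF)

theorem sMetric_le_two_mul_jStar (hF : (frontier G).Nonempty) :
    sMetric G x y ≤ 2 * jStar G x y := by
  rcases eq_or_ne x y with rfl | hxy
  · simp [jStar, sMetric]
  have hL : 0 < ‖x - y‖ := norm_pos_iff.2 (sub_ne_zero.2 hxy)
  have hD := le_sInf_norm_add_norm (x := x) (y := y) hF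
  calc sMetric G x y ≤ ‖x - y‖ / ((‖x - y‖ + 2 * minBoundaryDist G x y) / 2) :=
        div_le_div_of_nonneg_left hL.le (by linarith [minBoundaryDist_nonneg G x y])
          (by rw [max_le_iff] at hD; linarith)
    _ = 2 * jStar G x y := by rw [jStar_eq_div, div_div_eq_mul_div]; ring

lemma log_one_add_crossRatio_le (hx : x ∉ frontier G) (hy : y ∉ frontier G)
    (ha : a ∈ frontier G) (hb : b ∈ frontier G) :
    log (1 + crossRatio a x b y) ≤ log ((1 + ‖x - y‖ / minBoundaryDist G x y) ^ 2) :=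
  log_le_log (by linarith [crossRatio_nonneg a x b y])
    (one_add_crossRatio_le (minBoundaryDist_pos ⟨a, ha⟩ hx hy)
      (minBoundaryDist_le_left ha) (minBoundaryDist_le_right hb))

lemma deltaMetric_le (hF : (frontier G).Nonempty) (hx : x ∉ frontier G) (hy : y ∉ frontier G) :
    deltaMetric G x y ≤ log ((1 + ‖x - y‖ / minBoundaryDist G x y) ^ 2) :=
  csSup_le ((hF.prod hF).image _)
    (forall_mem_image.2 fun _ hp => log_one_add_crossRatio_le hx hy hp.1 hp.2)

lemma log_one_add_crossRatio_le_deltaMetric (hx : x ∉ frontier G) (hy : y ∉ frontier G)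
    (ha : a ∈ frontier G) (hb : b ∈ frontier G) :
    log (1 + crossRatio a x b y) ≤ deltaMetric G x y :=
  le_csSup ⟨_, forall_mem_image.2 fun _ hp => log_one_add_crossRatio_le hx hy hp.1 hp.2⟩
    (mem_image_of_mem _ (mk_mem_prod ha hb))

theorem tanh_half_deltaMetric_le_two_mul_jStar (hF : (frontier G).Nonempty)
    (hx : x ∉ frontier G) (hy : y ∉ frontier G) :
    tanh (deltaMetric G x y / 2) ≤ 2 * jStar G x y := by
  have hm := minBoundaryDist_pos hF hx hy
  rw [tanh_half_eq, jStar_eq_div]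
  refine div_le_two_mul_div_of_le_sq (norm_nonneg _) hm (exp_pos _) ?_
  exact (le_log_iff_exp_le (by positivity)).1 (deltaMetric_le hF hx hy)

theorem jStar_le_tanh_half_deltaMetric (hx : x ∉ frontier G) (hy : y ∉ frontier G)
    (ha : a ∈ frontier G) (hb : b ∈ frontier G)
    (hab : ‖x - y‖ / minBoundaryDist G x y ≤ crossRatio a x b y) :
    jStar G x y ≤ tanh (deltaMetric G x y / 2) := by
  have hm := minBoundaryDist_pos ⟨a, ha⟩ hx hy
  rw [tanh_half_eq, jStar_eq_div]
  refine div_add_two_mul_le_of_one_add_div_le (norm_nonneg _) hm ?_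
  have hpos : 0 < 1 + crossRatio a x b y := by linarith [crossRatio_nonneg a x b y]
  calc 1 + ‖x - y‖ / minBoundaryDist G x y ≤ 1 + crossRatio a x b y := by linarith
    _ ≤ exp (deltaMetric G x y) :=
      (log_le_iff_le_exp hpos).1 (log_one_add_crossRatio_le_deltaMetric hx hy ha hb)

lemma exists_le_crossRatio (hG : IsOpen G) (hF : (frontier G).Nonempty) (hx : x ∈ G) (hy : y ∈ G)
    (hfar : ∀ a ∈ frontier G, ∀ z ∈ G, ∃ b ∈ frontier G, ‖b - z‖ ≤ ‖a - b‖) :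
    ∃ a ∈ frontier G, ∃ b ∈ frontier G,
      ‖x - y‖ / minBoundaryDist G x y ≤ crossRatio a x b y := by
  have hdist : ∀ b ∈ frontier G, ∀ z ∈ G, 0 < ‖b - z‖ := fun b hb z hz =>
    norm_pos_iff.2 (sub_ne_zero.2 (ne_of_mem_of_not_mem hz
      (disjoint_left.1 (disjoint_frontier_iff_isOpen.2 hG) hb)).symm)
  obtain ⟨a, ha, hax | hay⟩ := exists_mem_frontier_norm_sub_eq_minBoundaryDist (x := x) (y := y) hF
  · obtain ⟨b, hb, hle⟩ := hfar a ha y hy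
    exact ⟨a, ha, b, hb, hax ▸ div_norm_sub_le_crossRatio (hdist b hb y hy) hle⟩
  · obtain ⟨b, hb, hle⟩ := hfar a ha x hx
    refine ⟨b, hb, a, ha, ?_⟩
    rw [← crossRatio_swap, ← hay, norm_sub_rev]
    exact div_norm_sub_le_crossRatio (hdist b hb x hx) hle

end Domain

lemma annulus_eq (r : ℝ) : annulus r = ball 0 1 ∩ (closedBall 0 r)ᶜ := by
  ext z
  simp [annulus, and_comm]

lemma isOpen_annulus (r : ℝ) : IsOpen (annulus r) := by
  rw [annulus_eq]
  exact isOpen_ball.inter isClosed_closedBall.isOpen_compl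

lemma frontier_annulus_subset (r : ℝ) : frontier (annulus r) ⊆ sphere 0 r ∪ sphere 0 1 := by
  rw [annulus_eq]
  refine (frontier_inter_subset _ _).trans (union_subset ?_ ?_)
  · rw [frontier_ball _ one_ne_zero]
    exact inter_subset_left.trans subset_union_right
  · rw [frontier_compl, frontier_closedBall']
    exact inter_subset_right.trans subset_union_left

lemma sphere_subset_frontier_annulus {r : ℝ} (hr : r < 1) : sphere 0 1 ⊆ frontier (annulus r) := by
  intro z hz
  rw [mem_sphere_zero_iff_norm] at hz
  rw [(isOpen_annulus r).frontier_eq, annulus_eq]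
  have hz_closure : z ∈ closure (ball (0 : ℂ) 1) := by
    rw [closure_ball _ one_ne_zero, mem_closedBall_zero_iff]; exact hz.le
  have hz_outer : z ∈ (closedBall (0 : ℂ) r)ᶜ := by
    rw [mem_compl_iff, mem_closedBall_zero_iff, hz]; exact hr.not_ge
  refine ⟨?_, fun h => (mem_ball_zero_iff.1 h.1).ne hz⟩
  rw [inter_comm]
  exact isClosed_closedBall.isOpen_compl.inter_closure ⟨hz_outer, hz_closure⟩

lemma exists_sphere_norm_sub_le {r : ℝ} {a z : ℂ} (ha : a ∈ sphere 0 r ∪ sphere 0 1)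
    (hz : z ∈ annulus r) : ∃ b ∈ sphere (0 : ℂ) 1, ‖b - z‖ ≤ ‖a - b‖ := by
  simp only [mem_union, mem_sphere_zero_iff_norm] at ha
  rcases ha with ha | ha
  · have hz0 : z ≠ 0 := norm_pos_iff.1 ((ha ▸ norm_nonneg a).trans_lt hz.1)
    have hb1 : ‖z / ‖z‖‖ = 1 := by simp [hz0]
    have hb : z / ‖z‖ - z = ((1 - ‖z‖ : ℝ) : ℂ) * (z / ‖z‖) := by
      have : (‖z‖ : ℂ) ≠ 0 := by exact_mod_cast norm_ne_zero_iff.2 hz0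
      push_cast; field_simp
    refine ⟨z / ‖z‖, mem_sphere_zero_iff_norm.2 hb1, ?_⟩
    calc ‖z / ‖z‖ - z‖ = 1 - ‖z‖ := by
          rw [hb, norm_mul, hb1, mul_one, Complex.norm_real, Real.norm_of_nonneg (by linarith [hz.2])]
      _ ≤ ‖z / ‖z‖‖ - ‖a‖ := by rw [hb1, ha]; linarith [hz.1]
      _ ≤ ‖a - z / ‖z‖‖ := by rw [norm_sub_rev]; exact norm_sub_norm_le _ _
  · refine ⟨-a, by simp [ha], ?_⟩
    calc ‖-a - z‖ ≤ ‖-a‖ + ‖z‖ := norm_sub_le _ _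
      _ ≤ 2 := by rw [norm_neg, ha]; linarith [hz.2]
      _ = ‖a - -a‖ := by rw [sub_neg_eq_add, ← two_mul, norm_mul, ha]; norm_num

lemma exists_frontier_annulus_norm_sub_le {r : ℝ} (hr : r < 1) {a z : ℂ}
    (ha : a ∈ frontier (annulus r)) (hz : z ∈ annulus r) :
    ∃ b ∈ frontier (annulus r), ‖b - z‖ ≤ ‖a - b‖ :=
  let ⟨b, hb, hle⟩ := exists_sphere_norm_sub_le (frontier_annulus_subset r ha) hz
  ⟨b, sphere_subset_frontier_annulus hr hb, hle⟩

theorem stmt10_general (r : ℝ) (hr1 : r < 1) (x y : ℂ)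
    (hx : x ∈ annulus r) (hy : y ∈ annulus r) :
    (1 / 2) * sMetric (annulus r) x y ≤ jStar (annulus r) x y ∧
    jStar (annulus r) x y ≤ Real.tanh (deltaMetric (annulus r) x y / 2) ∧
    Real.tanh (deltaMetric (annulus r) x y / 2) ≤ 2 * jStar (annulus r) x y ∧
    2 * jStar (annulus r) x y ≤ 2 * sMetric (annulus r) x y := by
  have hG := isOpen_annulus r
  have hF : (frontier (annulus r)).Nonempty := ⟨1, sphere_subset_frontier_annulus hr1 (by simp)⟩
  have hxF := disjoint_right.1 (disjoint_frontier_iff_isOpen.2 hG) hx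
  have hyF := disjoint_right.1 (disjoint_frontier_iff_isOpen.2 hG) hy
  obtain ⟨a, ha, b, hb, hab⟩ := exists_le_crossRatio hG hF hx hy
    fun a ha z hz => exists_frontier_annulus_norm_sub_le hr1 ha hz
  refine ⟨?_, jStar_le_tanh_half_deltaMetric hxF hyF ha hb hab,
    tanh_half_deltaMetric_le_two_mul_jStar hF hxF hyF, ?_⟩
  · linarith [sMetric_le_two_mul_jStar (x := x) (y := y) hF]
  · linarith [jStar_le_sMetric (x := x) (y := y) hF]

/-- The sharp inequality chain
`(1/2)s ≤ j* ≤ th(δ/2) ≤ 2j* ≤ 2s` in the annular ring `R(r,1)`. -/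
theorem stmt10 (r : ℝ) (hr0 : 0 < r) (hr1 : r < 1) (x y : ℂ)
    (hx : x ∈ annulus r) (hy : y ∈ annulus r) :
    (1 / 2) * sMetric (annulus r) x y ≤ jStar (annulus r) x y ∧
    jStar (annulus r) x y ≤ Real.tanh (deltaMetric (annulus r) x y / 2) ∧
    Real.tanh (deltaMetric (annulus r) x y / 2) ≤ 2 * jStar (annulus r) x y ∧
    2 * jStar (annulus r) x y ≤ 2 * sMetric (annulus r) x y :=
  stmt10_general r hr1 x y hx hy
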